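/- Let −π < θ_m < θ_M < π with 0 < θ_M − θ_m < π, and let K = {(r cos θ, r sin θ) ∈ ℝ² : r > 0, θ_m < θ < θ_M}. Then for every s > 0, ∫_K exp(−√s · √(x₁ + i x₂)) dx = 6 i (e^{−2iθ_M} − e^{−2iθ_m}) s^{−2}, where √(x₁ + i x₂) is the principal branch of the complex square root and √s the real square root. -/

import Mathlib

/-!
In polar coordinates the principal square root is `√z = √r e^{iθ/2}`, so the integrand becomes
`r exp(-a(θ) √r)` with `a(θ) = √s e^{iθ/2}`, and `Re a(θ) > 0` because `|θ| < π`. The substitution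
`r = t²` turns the radial integral into `2 ∫₀^∞ t³ e^{-a t} dt = 2 · 3! / a⁴ = 12 / a⁴`, which is
`12 s⁻² e^{-2iθ}`; integrating `e^{-2iθ}` over `(θ_m, θ_M)` gives the result. Fubini applies since
`Re a` has a positive minimum on the compact interval `[θ_m, θ_M]`.
-/

open MeasureTheory Set Filter Topology Complex

lemma norm_mul_cexp_neg_mul_ofReal (x a : ℂ) (u : ℝ) :
    ‖x * cexp (-(a * u))‖ = ‖x‖ * Real.exp (-(a.re * u)) := by
  simp [norm_exp]

lemma integrableOn_pow_mul_cexp_neg_mul {a : ℂ} (ha : 0 < a.re) (n : ℕ) :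
    IntegrableOn (fun t : ℝ => (t : ℂ) ^ n * cexp (-(a * t))) (Ioi 0) := by
  refine (integrableOn_rpow_mul_exp_neg_mul_rpow (s := n) (p := 1)
    (by linarith [n.cast_nonneg (α := ℝ)]) one_pos ha).mono' (by fun_prop) ?_
  filter_upwards [ae_restrict_mem measurableSet_Ioi] with t ht
  rw [norm_mul_cexp_neg_mul_ofReal]
  simp [abs_of_pos (mem_Ioi.1 ht)]

lemma tendsto_pow_mul_cexp_neg_mul_atTop {a : ℂ} (ha : 0 < a.re) (n : ℕ) :
    Tendsto (fun t : ℝ => (t : ℂ) ^ n * cexp (-(a * t))) atTop (𝓝 0) := by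
  rw [tendsto_zero_iff_norm_tendsto_zero]
  refine (tendsto_rpow_mul_exp_neg_mul_atTop_nhds_zero n a.re ha).congr' ?_
  filter_upwards [eventually_ge_atTop 0] with t ht
  rw [norm_mul_cexp_neg_mul_ofReal]
  simp [abs_of_nonneg ht]

lemma hasDerivAt_neg_cexp_neg_mul_div {a : ℂ} (ha : a ≠ 0) (t : ℝ) :
    HasDerivAt (fun t : ℝ => -cexp (-(a * t)) / a) (cexp (-(a * t))) t := by
  convert ((hasDerivAt_mul_const a).neg.cexp.neg.div_const a).comp_ofReal (z := t) using 1
  · funext t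
    simp [mul_comm]
  · field_simp
    simp

/-- Integration by parts against `e^{-at}`. -/
lemma integral_pow_succ_mul_cexp_neg_mul_Ioi {a : ℂ} (ha : 0 < a.re) (n : ℕ) :
    ∫ t in Ioi (0 : ℝ), (t : ℂ) ^ (n + 1) * cexp (-(a * t))
      = (n + 1) / a * ∫ t in Ioi (0 : ℝ), (t : ℂ) ^ n * cexp (-(a * t)) := by
  have ha0 : a ≠ 0 := fun h => by simp [h] at ha
  have hu (t : ℝ) : HasDerivAt (fun t : ℝ => (t : ℂ) ^ (n + 1)) ((n + 1 : ℂ) * (t : ℂ) ^ n) t := by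
    simpa using (hasDerivAt_pow (n + 1) (t : ℂ)).comp_ofReal
  have hu'v (t : ℝ) : (n + 1 : ℂ) * (t : ℂ) ^ n * (-cexp (-(a * t)) / a)
      = -((n + 1) / a * ((t : ℂ) ^ n * cexp (-(a * t)))) := by ring
  have huv_zero : Tendsto (fun t : ℝ => (t : ℂ) ^ (n + 1) * (-cexp (-(a * t)) / a))
      (𝓝[>] 0) (𝓝 0) := by
    have h := ((by fun_prop : Continuous fun t : ℝ => (t : ℂ) ^ (n + 1) *
      (-cexp (-(a * t)) / a)).tendsto 0).mono_left (nhdsWithin_le_nhds (s := Ioi 0))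
    simpa only [ofReal_zero, zero_pow n.succ_ne_zero, zero_mul] using h
  have huv_top : Tendsto (fun t : ℝ => (t : ℂ) ^ (n + 1) * (-cexp (-(a * t)) / a))
      atTop (𝓝 0) := by
    have h := (tendsto_pow_mul_cexp_neg_mul_atTop ha (n + 1)).neg.div_const a
    rw [neg_zero, zero_div] at h
    exact h.congr fun t => by ring
  rw [integral_Ioi_mul_deriv_eq_deriv_mul (fun t _ => hu t)
      (fun t _ => hasDerivAt_neg_cexp_neg_mul_div ha0 t)
      (integrableOn_pow_mul_cexp_neg_mul ha (n + 1))
      (IntegrableOn.congr_fun ((integrableOn_pow_mul_cexp_neg_mul ha n).const_mul _).neg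
        (fun t _ => (hu'v t).symm) measurableSet_Ioi) huv_zero huv_top]
  simp_rw [hu'v, integral_neg, integral_const_mul]
  ring

theorem integral_pow_mul_cexp_neg_mul_Ioi {a : ℂ} (ha : 0 < a.re) (n : ℕ) :
    ∫ t in Ioi (0 : ℝ), (t : ℂ) ^ n * cexp (-(a * t)) = n.factorial / a ^ (n + 1) := by
  have ha0 : a ≠ 0 := fun h => by simp [h] at ha
  induction n with
  | zero =>
    simpa [neg_mul, ← neg_div] using integral_exp_mul_complex_Ioi (a := -a) (by simpa) 0
  | succ n ih =>
    rw [integral_pow_succ_mul_cexp_neg_mul_Ioi ha, ih]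
    push_cast [Nat.factorial_succ]
    field_simp
    ring

lemma smul_comp_sq_mul_cexp_neg_mul_sqrt (a : ℂ) {t : ℝ} (ht : 0 < t) :
    ((2 : ℝ) * t ^ ((2 : ℝ) - 1)) • (((t ^ (2 : ℝ) : ℝ) : ℂ) * cexp (-(a * √(t ^ (2 : ℝ)))))
      = 2 * ((t : ℂ) ^ 3 * cexp (-(a * t))) := by
  rw [Real.rpow_two, Real.sqrt_sq ht.le]
  norm_num
  ring

lemma integrableOn_mul_cexp_neg_mul_sqrt {a : ℂ} (ha : 0 < a.re) :
    IntegrableOn (fun r : ℝ => (r : ℂ) * cexp (-(a * √r))) (Ioi 0) := by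
  rw [← integrableOn_Ioi_comp_rpow_iff _ two_ne_zero, abs_two]
  exact IntegrableOn.congr_fun ((integrableOn_pow_mul_cexp_neg_mul ha 3).const_mul 2)
    (fun t ht => (smul_comp_sq_mul_cexp_neg_mul_sqrt a ht).symm) measurableSet_Ioi

theorem integral_mul_cexp_neg_mul_sqrt_Ioi {a : ℂ} (ha : 0 < a.re) :
    ∫ r in Ioi (0 : ℝ), (r : ℂ) * cexp (-(a * √r)) = 12 / a ^ 4 := by
  rw [← integral_comp_rpow_Ioi_of_pos two_pos,
    setIntegral_congr_fun measurableSet_Ioi fun t ht => smul_comp_sq_mul_cexp_neg_mul_sqrt a ht,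
    integral_const_mul, integral_pow_mul_cexp_neg_mul_Ioi ha]
  norm_num [Nat.factorial]
  ring

lemma cexp_cpow {w : ℂ} (h₁ : -Real.pi < w.im) (h₂ : w.im ≤ Real.pi) (y : ℂ) :
    cexp w ^ y = cexp (w * y) := by
  rw [cpow_def_of_ne_zero (exp_ne_zero w), log_exp h₁ h₂]

lemma cpow_half_of_polar {r θ : ℝ} (hr : 0 < r) (hθ : θ ∈ Ioo (-Real.pi) Real.pi) :
    (((r * Real.cos θ : ℝ) : ℂ) + ((r * Real.sin θ : ℝ) : ℂ) * I) ^ (1 / 2 : ℂ)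
      = √r * cexp (θ / 2 * I) := by
  have hpolar : ((r * Real.cos θ : ℝ) : ℂ) + ((r * Real.sin θ : ℝ) : ℂ) * I
      = cexp (Real.log r + θ * I) := by
    rw [exp_add, ← ofReal_exp, Real.exp_log hr, exp_mul_I]
    push_cast
    ring
  rw [hpolar, cexp_cpow (by simpa using hθ.1) (by simpa using hθ.2.le), add_mul, exp_add,
    Real.sqrt_eq_rpow, Real.rpow_def_of_pos hr, ofReal_exp]
  push_cast
  ring_nf

theorem setIntegral_image_polarCoord_symm {E : Type*} [NormedAddCommGroup E] [NormedSpace ℝ E]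
    (f : ℝ × ℝ → E) {T : Set (ℝ × ℝ)} (hT : MeasurableSet T) (hTt : T ⊆ polarCoord.target) :
    ∫ x in polarCoord.symm '' T, f x = ∫ p in T, p.1 • f (polarCoord.symm p) := by
  rw [integral_image_eq_integral_abs_det_fderiv_smul volume hT
    (fun p _ => (hasFDerivAt_polarCoord_symm p).hasFDerivWithinAt)
    (polarCoord.symm.injOn.mono hTt)]
  refine setIntegral_congr_fun hT fun p hp => ?_
  rw [det_fderivPolarCoordSymm, abs_of_pos (hTt hp).1]

lemma sector_eq_image_polarCoord_symm (θm θM : ℝ) :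
    {x : ℝ × ℝ | ∃ r θ : ℝ, 0 < r ∧ θm < θ ∧ θ < θM ∧ x = (r * Real.cos θ, r * Real.sin θ)}
      = polarCoord.symm '' (Ioi 0 ×ˢ Ioo θm θM) := by
  ext x
  constructor
  · rintro ⟨r, θ, hr, h₁, h₂, rfl⟩
    exact ⟨(r, θ), ⟨hr, h₁, h₂⟩, rfl⟩
  · rintro ⟨⟨r, θ⟩, ⟨hr, h₁, h₂⟩, rfl⟩
    exact ⟨r, θ, hr, h₁, h₂, rfl⟩

lemma integrableOn_mul_cexp_neg_mul_sqrt_prod {a : ℝ → ℂ} (ha : Continuous a) {S : Set ℝ}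
    (hS : IsCompact S) (hpos : ∀ θ ∈ S, 0 < (a θ).re) :
    IntegrableOn (fun p : ℝ × ℝ => (p.1 : ℂ) * cexp (-(a p.2 * √p.1))) (Ioi 0 ×ˢ S) := by
  rcases S.eq_empty_or_nonempty with rfl | hne
  · simp
  obtain ⟨θ₀, hθ₀, hmin⟩ := hS.exists_isMinOn hne (continuous_re.comp ha).continuousOn
  have : IsFiniteMeasure (volume.restrict S) := isFiniteMeasure_restrict.2 hS.measure_lt_top.ne
  have hdom := (integrableOn_mul_cexp_neg_mul_sqrt (a := (a θ₀).re)
    (by simpa using hpos θ₀ hθ₀)).norm.comp_fst (volume.restrict S)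
  rw [IntegrableOn, Measure.volume_eq_prod, ← Measure.prod_restrict]
  refine hdom.mono' ((by fun_prop : Continuous _).aestronglyMeasurable) ?_
  rw [Measure.prod_restrict]
  filter_upwards [ae_restrict_mem (measurableSet_Ioi.prod hS.measurableSet)] with p hp
  simp only [norm_mul_cexp_neg_mul_ofReal, ofReal_re]
  gcongr _ * Real.exp (-(?_ * _))
  exact hmin hp.2

/-- `√s μ̂(θ)`: the CGO solution `exp(-√(s r) μ̂(θ))` is `exp(-cgoRate s θ * √r)`. -/
noncomputable def cgoRate (s θ : ℝ) : ℂ := √s * cexp (θ / 2 * I)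

lemma continuous_cgoRate (s : ℝ) : Continuous (cgoRate s) := by
  unfold cgoRate
  fun_prop

lemma re_cgoRate (s θ : ℝ) : (cgoRate s θ).re = √s * Real.cos (θ / 2) := by
  rw [cgoRate, show (θ / 2 * I : ℂ) = ((θ / 2 : ℝ) : ℂ) * I by push_cast; ring, re_ofReal_mul,
    exp_ofReal_mul_I_re]

lemma re_cgoRate_pos {s θ : ℝ} (hs : 0 < s) (hθ : θ ∈ Ioo (-Real.pi) Real.pi) :
    0 < (cgoRate s θ).re := by
  rw [re_cgoRate]
  exact mul_pos (Real.sqrt_pos.2 hs)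
    (Real.cos_pos_of_mem_Ioo ⟨by linarith [hθ.1], by linarith [hθ.2]⟩)

lemma cgoRate_pow_four {s : ℝ} (hs : 0 ≤ s) (θ : ℝ) :
    cgoRate s θ ^ 4 = s ^ 2 * cexp (2 * θ * I) := by
  rw [cgoRate, mul_pow, ← exp_nat_mul, show (4 : ℕ) = 2 * 2 from rfl, pow_mul, ← ofReal_pow,
    Real.sq_sqrt hs]
  push_cast
  ring_nf

lemma smul_cgo_polarCoord_symm (s : ℝ) {p : ℝ × ℝ} (hp : p ∈ polarCoord.target) :
    p.1 • cexp (-(√s : ℂ) *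
        (((polarCoord.symm p).1 : ℂ) + ((polarCoord.symm p).2 : ℂ) * I) ^ (1 / 2 : ℂ))
      = (p.1 : ℂ) * cexp (-(cgoRate s p.2 * √p.1)) := by
  rw [polarCoord_symm_apply, cpow_half_of_polar hp.1 hp.2, real_smul, cgoRate]
  ring_nf

lemma integral_Ioo_cexp_neg_two_mul_I {α β : ℝ} (h : α ≤ β) :
    ∫ θ in Ioo α β, cexp (-2 * θ * I) = I / 2 * (cexp (-2 * β * I) - cexp (-2 * α * I)) := by
  rw [← integral_Ioc_eq_integral_Ioo, ← intervalIntegral.integral_of_le h]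
  simp_rw [show ∀ θ : ℝ, (-2 * θ * I : ℂ) = -2 * I * θ from fun θ => by ring]
  rw [integral_exp_mul_complex (by simp)]
  field_simp
  ring_nf
  simp [I_sq]

theorem sector_integral_scalar_cgo_general (θm θM : ℝ) (hθm : -Real.pi < θm) (hθM : θM < Real.pi)
    (hlt : 0 < θM - θm) (s : ℝ) (hs : 0 < s) :
    ∫ x : ℝ × ℝ in {x : ℝ × ℝ | ∃ r θ : ℝ, 0 < r ∧ θm < θ ∧ θ < θM ∧
        x = (r * Real.cos θ, r * Real.sin θ)},
      Complex.exp (-(Real.sqrt s : ℂ) * ((x.1 : ℂ) + (x.2 : ℂ) * Complex.I) ^ (1/2 : ℂ))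
      = 6 * Complex.I *
        (Complex.exp (-2 * (θM : ℂ) * Complex.I) - Complex.exp (-2 * (θm : ℂ) * Complex.I)) /
        (s : ℂ) ^ 2 := by
  have hIcc : Icc θm θM ⊆ Ioo (-Real.pi) Real.pi := Icc_subset_Ioo hθm hθM
  have hT : Ioi 0 ×ˢ Ioo θm θM ⊆ polarCoord.target :=
    prod_mono subset_rfl (Ioo_subset_Icc_self.trans hIcc)
  have hint := (integrableOn_mul_cexp_neg_mul_sqrt_prod (continuous_cgoRate s) isCompact_Icc
    fun θ hθ => re_cgoRate_pos hs (hIcc hθ)).mono_set (prod_mono subset_rfl Ioo_subset_Icc_self)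
  rw [IntegrableOn, Measure.volume_eq_prod, ← Measure.prod_restrict] at hint
  have hradial (θ : ℝ) : 12 / cgoRate s θ ^ 4 = 12 / (s : ℂ) ^ 2 * cexp (-2 * θ * I) := by
    rw [cgoRate_pow_four hs.le, div_mul_eq_div_div, div_eq_mul_inv _ (cexp _), ← exp_neg]
    ring_nf
  rw [sector_eq_image_polarCoord_symm,
    setIntegral_image_polarCoord_symm _ (measurableSet_Ioi.prod measurableSet_Ioo) hT,
    setIntegral_congr_fun (measurableSet_Ioi.prod measurableSet_Ioo)
      fun p hp => smul_cgo_polarCoord_symm s (hT hp),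
    Measure.volume_eq_prod, ← Measure.prod_restrict, integral_prod_symm _ hint,
    setIntegral_congr_fun measurableSet_Ioo fun θ hθ =>
      integral_mul_cexp_neg_mul_sqrt_Ioi (re_cgoRate_pos hs (hIcc (Ioo_subset_Icc_self hθ)))]
  simp_rw [hradial, integral_const_mul, integral_Ioo_cexp_neg_two_mul_I (by linarith : θm ≤ θM)]
  ring

/-- the sector integral of the scalar CGO solution
`exp(-√s √z)`, `z = x₁ + i x₂` (principal branch square root), equals
`6 i (e^{-2iθ_M} - e^{-2iθ_m}) s^{-2}`. -/
theorem sector_integral_scalar_cgo (θm θM : ℝ) (hθm : -Real.pi < θm) (hθM : θM < Real.pi)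
    (hlt : 0 < θM - θm) (hopen : θM - θm < Real.pi) (s : ℝ) (hs : 0 < s) :
    ∫ x : ℝ × ℝ in {x : ℝ × ℝ | ∃ r θ : ℝ, 0 < r ∧ θm < θ ∧ θ < θM ∧
        x = (r * Real.cos θ, r * Real.sin θ)},
      Complex.exp (-(Real.sqrt s : ℂ) * ((x.1 : ℂ) + (x.2 : ℂ) * Complex.I) ^ (1/2 : ℂ))
      = 6 * Complex.I *
        (Complex.exp (-2 * (θM : ℂ) * Complex.I) - Complex.exp (-2 * (θm : ℂ) * Complex.I)) /
        (s : ℂ) ^ 2 :=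
  sector_integral_scalar_cgo_general θm θM hθm hθM hlt s hs
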